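/- arXiv:2009.11276 — 3 statements merged into one kernel-verified Lean document; each statement's English description precedes it below -/
import Mathlib

section
/- If Γ is a vertex-transitive graph of uncountable cardinality κ, finite diameter m, and its distance sequence is 1, κ, ..., κ, α with α < κ (i.e., the set of vertices at distance m from any fixed vertex has cardinality α < κ), then Γ is imprimitive. -/
def VertexTransitive {V : Type*} (G : SimpleGraph V) : Prop :=
  ∀ u v : V, ∃ φ : G ≃g G, φ u = v

def InvariantRel {V : Type*} (G : SimpleGraph V) (r : V → V → Prop) : Prop :=
  ∀ φ : G ≃g G, ∀ u v : V, r u v ↔ r (φ u) (φ v)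

def GraphPrimitive {V : Type*} (G : SimpleGraph V) : Prop :=
  ∀ r : V → V → Prop, Equivalence r → InvariantRel G r →
    (∀ u v : V, r u v ↔ u = v) ∨ (∀ u v : V, r u v)

def DistanceTransitive {V : Type*} (G : SimpleGraph V) : Prop :=
  ∀ a b c d : V, G.dist a b = G.dist c d → ∃ φ : G ≃g G, φ a = c ∧ φ b = d


open Cardinal

private lemma iso_dist_eq {V : Type*} {G : SimpleGraph V} (hconn : G.Connected)
    (φ : G ≃g G) (u v : V) : G.dist (φ u) (φ v) = G.dist u v := by
  have key : ∀ (ψ : G ≃g G) (a b : V), G.dist (ψ a) (ψ b) ≤ G.dist a b := by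
    intro ψ a b
    obtain ⟨p, hp⟩ := hconn.exists_walk_length_eq_dist a b
    calc G.dist (ψ a) (ψ b) ≤ (p.map ψ.toHom).length := SimpleGraph.dist_le _
      _ = G.dist a b := by rw [SimpleGraph.Walk.length_map, hp]
  refine le_antisymm (key φ u v) ?_
  have := key φ.symm (φ u) (φ v)
  simpa using this

/-- A vertex-transitive graph of uncountable cardinality `κ`, finite diameter `m`, and
distance sequence `1, κ, …, κ, α` with `α < κ` is imprimitive. -/
theorem uncountable_small_last_entry_imprimitive {V : Type*} (G : SimpleGraph V)
    (hcard : Cardinal.aleph0 < Cardinal.mk V)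
    (hconn : G.Connected) (hvt : VertexTransitive G)
    (m : ℕ) (hm : 1 ≤ m)
    (hdiam_le : ∀ u v : V, G.dist u v ≤ m)
    (hdiam : ∀ v : V, ∃ w : V, G.dist v w = m)
    (hmid : ∀ v : V, ∀ i : ℕ, 1 ≤ i → i < m →
      Cardinal.mk {w : V // G.dist v w = i} = Cardinal.mk V)
    (hlast : ∀ v : V, Cardinal.mk {w : V // G.dist v w = m} < Cardinal.mk V) :
    ¬ GraphPrimitive G := by
  intro hprim
  have hne : Nonempty V := hconn.nonempty
  obtain ⟨v₀⟩ := hne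
  set R : V → V → Prop := fun a b => G.dist a b = m with hR
  -- all fibers have the same cardinality α
  set α : Cardinal := Cardinal.mk {w : V // G.dist v₀ w = m} with hα
  have hfib : ∀ u : V, Cardinal.mk {w : V // G.dist u w = m} = α := by
    intro u
    obtain ⟨φ, hφ⟩ := hvt v₀ u
    symm
    exact Cardinal.mk_congr <| (Equiv.subtypeEquiv φ.toEquiv fun w => by
      rw [show (φ.toEquiv w : V) = φ w from rfl, ← hφ, iso_dist_eq hconn])
  set r : V → V → Prop := Relation.ReflTransGen R with hr
  have hRsymm : Symmetric R := fun a b h => by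
    show G.dist _ _ = m
    rw [G.dist_comm]; exact h
  have hequiv : Equivalence r := by
    refine ⟨fun a => Relation.ReflTransGen.refl, fun h => (@Relation.ReflTransGen.symmetric _ _ ⟨hRsymm⟩).symm _ _ h,
      fun h1 h2 => h1.trans h2⟩
  have hinv : InvariantRel G r := by
    have key : ∀ (φ : G ≃g G) (a b : V), r a b → r (φ a) (φ b) := by
      intro φ a b h
      induction h with
      | refl => exact Relation.ReflTransGen.refl
      | tail _ hstep ih =>
        refine ih.tail (show G.dist (φ _) (φ _) = m from ?_)
        rw [iso_dist_eq hconn]; exact hstep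
    intro φ u v
    constructor
    · exact key φ u v
    · intro h
      have := key φ.symm (φ u) (φ v) h
      simpa using this
  rcases hprim r hequiv hinv with heq | huniv
  · -- r is equality: contradiction with diameter witness
    obtain ⟨w, hw⟩ := hdiam v₀
    have hrv : r v₀ w := Relation.ReflTransGen.single hw
    have : v₀ = w := (heq v₀ w).mp hrv
    rw [← this] at hw
    simp [SimpleGraph.dist_self] at hw
    omega
  · -- r universal: contradiction via cardinality of component
    set β : Cardinal := max Cardinal.aleph0 α with hβ
    have hβinf : Cardinal.aleph0 ≤ β := le_max_left _ _
    have hβlt : β < Cardinal.mk V := max_lt hcard (hlast v₀)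
    -- the layered sets
    let S : ℕ → Set V := fun n => Nat.rec {v₀}
      (fun _ s => s ∪ ⋃ u ∈ s, {w | G.dist u w = m}) n
    have hS0 : S 0 = {v₀} := rfl
    have hSsucc : ∀ n, S (n+1) = S n ∪ ⋃ u ∈ S n, {w | G.dist u w = m} := fun n => rfl
    have hv₀S : ∀ n, v₀ ∈ S n := by
      intro n
      induction n with
      | zero => exact rfl
      | succ n ih => exact Set.mem_union_left _ ih
    have hScard : ∀ n, Cardinal.mk ↥(S n) ≤ β := by
      intro n
      induction n with
      | zero => simpa [hS0] using (Cardinal.one_le_aleph0.trans hβinf)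
      | succ n ih =>
        rw [hSsucc]
        calc Cardinal.mk ↥(S n ∪ ⋃ u ∈ S n, {w | G.dist u w = m})
            ≤ Cardinal.mk ↥(S n) + Cardinal.mk ↥(⋃ u ∈ S n, {w | G.dist u w = m}) :=
              Cardinal.mk_union_le _ _
          _ ≤ β + β := by
              refine add_le_add ih ?_
              calc Cardinal.mk ↥(⋃ u ∈ S n, {w | G.dist u w = m})
                  ≤ Cardinal.mk ↥(S n) * ⨆ u : S n, Cardinal.mk {w | G.dist (u : V) w = m} :=
                    Cardinal.mk_biUnion_le _ _
                _ ≤ β * β := by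
                    refine mul_le_mul' ih ?_
                    have : Nonempty (S n) := ⟨⟨v₀, hv₀S n⟩⟩
                    refine ciSup_le' fun u => ?_
                    have : Cardinal.mk {w | G.dist (u : V) w = m} = α := hfib u
                    rw [this]
                    exact le_max_right _ _
                _ = β := Cardinal.mul_eq_self hβinf
          _ = β := Cardinal.add_eq_self hβinf
    -- component of v₀ is contained in ⋃ n, S n
    have hsub : ∀ w, r v₀ w → ∃ n, w ∈ S n := by
      intro w h
      induction h with
      | refl => exact ⟨0, rfl⟩
      | tail _ hstep ih =>
        obtain ⟨n, hn⟩ := ih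
        refine ⟨n + 1, Set.mem_union_right _ ?_⟩
        exact Set.mem_biUnion hn hstep
    have hUcard : Cardinal.mk ↥(⋃ n, S n) < Cardinal.mk V := by
      have h1 := Cardinal.mk_iUnion_le_lift (f := S)
      rw [Cardinal.lift_uzero, Cardinal.mk_nat, Cardinal.lift_aleph0] at h1
      refine lt_of_le_of_lt (h1.trans ?_) hβlt
      calc Cardinal.aleph0 * ⨆ n, Cardinal.lift.{0} (Cardinal.mk ↥(S n))
          ≤ β * β := by
            refine mul_le_mul' hβinf ?_
            refine ciSup_le' fun n => ?_
            rw [Cardinal.lift_uzero]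
            exact hScard n
        _ = β := Cardinal.mul_eq_self hβinf
    have : (Set.univ : Set V) ⊆ ⋃ n, S n := by
      intro w _
      obtain ⟨n, hn⟩ := hsub w (huniv v₀ w)
      exact Set.mem_iUnion.mpr ⟨n, hn⟩
    have := Cardinal.mk_le_mk_of_subset this
    rw [Cardinal.mk_univ] at this
    exact absurd (this.trans_lt hUcard) (lt_irrefl _)
end

section
/- (Smith) Let Γ be a connected distance-transitive graph and B a block of Aut(Γ). If B contains two adjacent vertices u and v, then B equals the entire vertex set. -/
/-- Smith: in a connected distance-transitive graph, a block containing two adjacent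
vertices must be the whole vertex set. -/
theorem block_with_edge_is_everything {V : Type*} (G : SimpleGraph V)
    (hconn : G.Connected) (hdt : DistanceTransitive G)
    (r : V → V → Prop) (hr : Equivalence r) (hinv : InvariantRel G r)
    (u v : V) (hadj : G.Adj u v) (huv : r u v) :
    ∀ w : V, r u w := by
  have h1 : ∀ a b : V, G.Adj a b → r a b := by
    intro a b hab
    obtain ⟨φ, hu, hv⟩ := hdt u v a b (by rw [SimpleGraph.dist_eq_one_iff_adj.mpr hadj, SimpleGraph.dist_eq_one_iff_adj.mpr hab])
    have := (hinv φ u v).mp huv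
    rwa [hu, hv] at this
  have key : ∀ a b : V, G.Walk a b → r a b := by
    intro a b p
    induction p with
    | nil => exact hr.refl _
    | cons h _ ih => exact hr.trans (h1 _ _ h) ih
  intro w
  exact key u w (hconn u w).some
end

section
/- The graph Γ^κ built by starting from a single vertex and at each stage attaching κ-many triangles to every vertex of finite degree (iterated ω times) is distance-transitive, contains odd cycles (hence is not bipartite), and has infinite diameter; for every vertex v and every i ≥ 1, the set of vertices at distance i from v has cardinality κ. -/
/-- The `ι`-tree of `b`-cliques, realized as the Cayley graph of the free product of
`ι`-many copies of `ℤ/b` with respect to the nonidentity elements of the factors: two group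
elements are joined iff they differ by a nontrivial element of one factor. Every vertex lies
in `|ι|` many `b`-cliques and every edge lies in a unique `b`-clique. -/
def treeOfCliques (ι : Type*) (b : ℕ) :
    SimpleGraph (Monoid.CoprodI (fun _ : ι => Multiplicative (ZMod b))) where
  Adj u v := u ≠ v ∧ ∃ (i : ι) (x : ZMod b),
    v = u * Monoid.CoprodI.of (M := fun _ : ι => Multiplicative (ZMod b)) (i := i)
      (Multiplicative.ofAdd x)
  symm := ⟨by
    rintro u v ⟨huv, i, x, rfl⟩
    refine ⟨huv.symm, i, -x, ?_⟩
    rw [mul_assoc, ← map_mul, ← ofAdd_add]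
    simp⟩
  loopless := ⟨fun u h => h.1 rfl⟩

namespace TreeGamma

open Monoid.CoprodI Multiplicative List

variable {ι : Type*} [DecidableEq ι]

abbrev MM (ι : Type*) : ι → Type := fun _ => Multiplicative (ZMod 3)

abbrev WW (ι : Type*) := Monoid.CoprodI (MM ι)

noncomputable abbrev E : WW ι ≃ Word (MM ι) := (Equiv.inv (WW ι)).trans Word.equiv

lemma equiv_apply (g : WW ι) : Word.equiv g = g • Word.empty := rfl

lemma prod_equiv (g : WW ι) : (Word.equiv g).prod = g := by
  rw [equiv_apply, Word.prod_smul, Word.prod_empty, mul_one]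

lemma E_mul_of (u : WW ι) (i : ι) (m : MM ι i) :
    E (u * of m) = of m⁻¹ • E u := by
  show Word.equiv ((u * of m)⁻¹) = of m⁻¹ • Word.equiv u⁻¹
  rw [equiv_apply, equiv_apply, mul_inv_rev, ← map_inv, mul_smul]

/-- list-level adjacency on reduced words -/
def AdjL (w w' : Word (MM ι)) : Prop :=
  (∃ l, w'.toList = l :: w.toList) ∨ (∃ l, w.toList = l :: w'.toList) ∨
  (∃ (i : ι) (h h' : Multiplicative (ZMod 3)) (t : List (Σ i : ι, MM ι i)), h ≠ h' ∧
    w.toList = ⟨i, h⟩ :: t ∧ w'.toList = ⟨i, h'⟩ :: t)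

lemma adjL_comm {w w' : Word (MM ι)} (h : AdjL w w') : AdjL w' w := by
  rcases h with h | h | ⟨i, a, b, t, hab, h1, h2⟩
  · exact Or.inr (Or.inl h)
  · exact Or.inl h
  · exact Or.inr (Or.inr ⟨i, b, a, t, hab.symm, h2, h1⟩)

lemma rcons_toList {i : ι} (p : Word.Pair (MM ι) i) :
    (Word.rcons p).toList =
      if p.head = 1 then p.tail.toList else ⟨i, p.head⟩ :: p.tail.toList := by
  by_cases h : p.head = 1 <;> simp [Word.rcons, h]

lemma smul_iff_adjL {w w' : Word (MM ι)} :
    (w ≠ w' ∧ ∃ (i : ι) (m : MM ι i), w' = of m • w) ↔ AdjL w w' := by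
  constructor
  · rintro ⟨hne, i, m, rfl⟩
    have hm : m ≠ 1 := by rintro rfl; rw [map_one, one_smul] at hne; exact hne rfl
    have hw : Word.rcons (Word.equivPair i w) = w := by
      rw [← Word.equivPair_symm, Equiv.symm_apply_apply]
    have hw' : (of m • w) = Word.rcons ⟨m * (Word.equivPair i w).head,
        (Word.equivPair i w).tail, (Word.equivPair i w).fstIdx_ne⟩ := Word.of_smul_def i w m
    by_cases hP : (Word.equivPair i w).head = 1
    · left
      refine ⟨⟨i, m⟩, ?_⟩
      have h1 : w.toList = (Word.equivPair i w).tail.toList := by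
        conv_lhs => rw [← hw, rcons_toList, if_pos hP]
      have h2 : (of m • w).toList = ⟨i, m⟩ :: (Word.equivPair i w).tail.toList := by
        rw [hw', rcons_toList]; simp [hP, hm]
      rw [h1, h2]
    · by_cases hmh : m * (Word.equivPair i w).head = 1
      · right; left
        refine ⟨⟨i, (Word.equivPair i w).head⟩, ?_⟩
        have h2 : (of m • w).toList = (Word.equivPair i w).tail.toList := by
          rw [hw', rcons_toList, if_pos hmh]
        conv_lhs => rw [← hw, rcons_toList, if_neg hP]
        rw [h2]
      · right; right
        refine ⟨i, (Word.equivPair i w).head, m * (Word.equivPair i w).head,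
          (Word.equivPair i w).tail.toList, ?_, ?_, ?_⟩
        · intro h; exact hm (right_eq_mul.mp h)
        · conv_lhs => rw [← hw, rcons_toList, if_neg hP]
        · rw [hw', rcons_toList, if_neg hmh]
  · rintro (⟨l, hl⟩ | ⟨l, hl⟩ | ⟨i, a, b, t, hab, h1, h2⟩)
    · have h1 : w.fstIdx ≠ some l.1 := by
        rw [Word.fstIdx_ne_iff]
        have := w'.chain_ne
        rw [hl, List.isChain_cons] at this
        intro l' hl'
        exact (this.1 l' hl')
      have h2 : l.2 ≠ 1 := w'.ne_one l (by rw [hl]; exact List.mem_cons_self)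
      have hw' : w' = Word.cons l.2 w h1 h2 := by
        apply Word.ext
        rw [hl, Word.cons_toList, Sigma.eta]
      constructor
      · intro h; apply_fun (List.length ∘ Word.toList) at h; simp [hl] at h
      · exact ⟨l.1, l.2, by rw [hw']; exact Word.cons_eq_smul⟩
    · -- w = l :: w' : w' is parent
      have h1 : w'.fstIdx ≠ some l.1 := by
        rw [Word.fstIdx_ne_iff]
        have := w.chain_ne
        rw [hl, List.isChain_cons] at this
        intro l' hl'
        exact (this.1 l' hl')
      have h2 : l.2 ≠ 1 := w.ne_one l (by rw [hl]; exact List.mem_cons_self)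
      have hw : w = Word.cons l.2 w' h1 h2 := by
        apply Word.ext
        rw [hl, Word.cons_toList, Sigma.eta]
      constructor
      · intro h; apply_fun (List.length ∘ Word.toList) at h; simp [hl] at h
      · refine ⟨l.1, l.2⁻¹, ?_⟩
        rw [hw, Word.cons_eq_smul, map_inv, ← mul_smul, inv_mul_cancel, one_smul]
    · have hta : ∀ l ∈ t, Sigma.snd l ≠ 1 := fun l hl =>
        w.ne_one l (by rw [h1]; exact List.mem_cons_of_mem _ hl)
      have htc : t.Chain' fun l l' => Sigma.fst l ≠ Sigma.fst l' := by
        have := w.chain_ne; rw [h1] at this; exact this.tail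
      set tW : Word (MM ι) := ⟨t, hta, htc⟩ with htW
      have hfst : tW.fstIdx ≠ some i := by
        rw [Word.fstIdx_ne_iff]
        have := w.chain_ne
        rw [h1, List.isChain_cons] at this
        intro l' hl'
        exact this.1 l' hl'
      have ha : a ≠ 1 := by
        have := w.ne_one ⟨i, a⟩ (by rw [h1]; exact List.mem_cons_self); exact this
      have hb : b ≠ 1 := by
        have := w'.ne_one ⟨i, b⟩ (by rw [h2]; exact List.mem_cons_self); exact this
      have hw : w = Word.cons (M := MM ι) (i := i) a tW hfst ha := by apply Word.ext; rw [h1]; rfl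
      have hw' : w' = Word.cons (M := MM ι) (i := i) b tW hfst hb := by apply Word.ext; rw [h2]; rfl
      constructor
      · intro h
        rw [h, h2] at h1
        exact hab (Sigma.mk.inj_iff.mp (List.cons_eq_cons.mp h1).1).2.eq.symm
      · refine ⟨i, b * a⁻¹, ?_⟩
        rw [hw, hw', Word.cons_eq_smul, Word.cons_eq_smul, ← mul_smul, ← map_mul,
          inv_mul_cancel_right]

lemma adj_iff_adjL {u v : WW ι} :
    (treeOfCliques ι 3).Adj u v ↔ AdjL (E u) (E v) := by
  rw [← smul_iff_adjL]
  constructor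
  · rintro ⟨hne, i, x, rfl⟩
    refine ⟨fun h => hne (E.injective h), i, (ofAdd x)⁻¹, ?_⟩
    exact E_mul_of u i (ofAdd x)
  · rintro ⟨hne, i, m, hm⟩
    refine ⟨fun h => hne (congrArg E h), i, toAdd m⁻¹, ?_⟩
    have : E v = E (u * of m⁻¹) := by
      rw [E_mul_of, inv_inv, hm]
    have := E.injective this
    rw [this]; rfl

end TreeGamma

namespace TreeGamma2
open Monoid.CoprodI Multiplicative List TreeGamma

variable {ι : Type*} [DecidableEq ι]

lemma E_one : E (ι := ι) 1 = Word.empty := by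
  show Word.equiv ((1 : WW ι)⁻¹) = Word.empty
  rw [inv_one, equiv_apply, one_smul]

lemma E_symm_E (g : WW ι) : E.symm (E g) = g := E.symm_apply_apply g

lemma adjL_length {w w' : Word (MM ι)} (h : AdjL w w') :
    w'.toList.length ≤ w.toList.length + 1 := by
  rcases h with ⟨l, hl⟩ | ⟨l, hl⟩ | ⟨i, a, b, t, hab, hh1, hh2⟩
  · simp [hl]
  · simp only [hl, List.length_cons]; omega
  · simp [hh1, hh2]

lemma exists_walk (w : Word (MM ι)) :
    ∃ p : (treeOfCliques ι 3).Walk 1 (E.symm w), p.length = w.toList.length := by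
  induction w using Monoid.CoprodI.Word.consRecOn with
  | empty =>
      have h : E.symm (Word.empty : Word (MM ι)) = 1 := by rw [← E_one, Equiv.symm_apply_apply]
      exact ⟨h ▸ SimpleGraph.Walk.nil, by simp; rfl⟩
  | cons i m w h1 h2 ih =>
      obtain ⟨p, hp⟩ := ih
      have hadj : (treeOfCliques ι 3).Adj (E.symm w) (E.symm (Word.cons m w h1 h2)) := by
        rw [adj_iff_adjL, E.apply_symm_apply, E.apply_symm_apply]
        exact Or.inl ⟨⟨i, m⟩, Word.cons_toList _ _ _ _⟩
      exact ⟨p.concat hadj, by rw [SimpleGraph.Walk.length_concat, hp, Word.cons_toList]; rfl⟩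

lemma preconnected : (treeOfCliques ι 3).Preconnected := by
  have h1 : ∀ g : WW ι, (treeOfCliques ι 3).Reachable 1 g := by
    intro g
    obtain ⟨p, _⟩ := exists_walk (E g)
    rw [E_symm_E] at p
    exact ⟨p⟩
  exact fun u v => (h1 u).symm.trans (h1 v)

lemma walk_bound : ∀ {x y : WW ι} (p : (treeOfCliques ι 3).Walk x y),
    (E y).toList.length ≤ (E x).toList.length + p.length := by
  intro x y p
  induction p with
  | nil => simp
  | @cons a b c hadj p ih =>
      have := adjL_length (adj_iff_adjL.mp hadj)
      simp only [SimpleGraph.Walk.length_cons]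
      omega

lemma dist_one (g : WW ι) : (treeOfCliques ι 3).dist 1 g = (E g).toList.length := by
  apply _root_.le_antisymm
  · obtain ⟨p, hp⟩ := exists_walk (E g)
    calc (treeOfCliques ι 3).dist 1 g ≤ (p.copy rfl (E_symm_E g)).length :=
          SimpleGraph.dist_le _
    _ = p.length := p.length_copy _ _
    _ = _ := hp
  · obtain ⟨p, hp⟩ := (preconnected 1 g).exists_walk_length_eq_dist
    have := walk_bound p
    rw [hp, E_one] at this
    simpa using this

def transIso (g : WW ι) : treeOfCliques ι 3 ≃g treeOfCliques ι 3 where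
  toEquiv := Equiv.mulLeft g
  map_rel_iff' := by
    intro a b
    show (treeOfCliques ι 3).Adj (g * a) (g * b) ↔ (treeOfCliques ι 3).Adj a b
    constructor
    · rintro ⟨hne, i, x, hx⟩
      refine ⟨fun h => hne (by rw [h]), i, x, ?_⟩
      rw [mul_assoc] at hx
      exact mul_left_cancel hx
    · rintro ⟨hne, i, x, hx⟩
      exact ⟨fun h => hne (mul_left_cancel h), i, x, by rw [hx, mul_assoc]⟩

lemma transIso_apply (g u : WW ι) : transIso g u = g * u := rfl

lemma iso_dist_le (φ : treeOfCliques ι 3 ≃g treeOfCliques ι 3) (u v : WW ι) :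
    (treeOfCliques ι 3).dist (φ u) (φ v) ≤ (treeOfCliques ι 3).dist u v := by
  obtain ⟨p, hp⟩ := (preconnected u v).exists_walk_length_eq_dist
  calc (treeOfCliques ι 3).dist (φ u) (φ v) ≤ (p.map φ.toHom).length :=
        SimpleGraph.dist_le _
  _ = _ := by rw [SimpleGraph.Walk.length_map, hp]

lemma iso_dist (φ : treeOfCliques ι 3 ≃g treeOfCliques ι 3) (u v : WW ι) :
    (treeOfCliques ι 3).dist (φ u) (φ v) = (treeOfCliques ι 3).dist u v := by
  refine le_antisymm (iso_dist_le φ u v) ?_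
  have := iso_dist_le φ.symm (φ u) (φ v)
  simpa using this

lemma dist_eq (u v : WW ι) :
    (treeOfCliques ι 3).dist u v = (E (u⁻¹ * v)).toList.length := by
  rw [← dist_one]
  have h : (treeOfCliques ι 3).dist (u⁻¹ * u) (u⁻¹ * v) = (treeOfCliques ι 3).dist u v :=
    iso_dist (transIso u⁻¹) u v
  rw [inv_mul_cancel] at h
  exact h.symm

end TreeGamma2

namespace TreeGamma3
open Monoid.CoprodI Multiplicative List TreeGamma TreeGamma2

variable {ι : Type*} [DecidableEq ι]

lemma smul_empty_toList {i : ι} (m : MM ι i) (hm : m ≠ 1) :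
    (of m • (Word.empty : Word (MM ι))).toList = [⟨i, m⟩] := by
  rw [Word.of_smul_def]
  have he : Word.equivPair i (Word.empty : Word (MM ι)) = ⟨1, Word.empty, by simp [Word.fstIdx]⟩ :=
    Word.equivPair_eq_of_fstIdx_ne (by simp [Word.fstIdx])
  rw [he, rcons_toList]
  simp [hm]

lemma E_of {i : ι} (m : MM ι i) (hm : m ≠ 1) :
    (E (of m)).toList = [⟨i, m⁻¹⟩] := by
  show (Word.equiv ((of m)⁻¹)).toList = _
  rw [← map_inv, equiv_apply]
  exact smul_empty_toList m⁻¹ (by simpa using hm)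

lemma of_ne_one {i : ι} (m : MM ι i) (hm : m ≠ 1) : of m ≠ 1 := by
  intro h
  have := E_of m hm
  rw [h, E_one] at this
  simp at this

lemma triangle (i : ι) :
    (treeOfCliques ι 3).Adj 1 (of (M := MM ι) (i := i) (ofAdd 1)) ∧
    (treeOfCliques ι 3).Adj (of (M := MM ι) (i := i) (ofAdd 1)) (of (M := MM ι) (i := i) (ofAdd 2)) ∧
    (treeOfCliques ι 3).Adj 1 (of (M := MM ι) (i := i) (ofAdd 2)) := by
  have h1 : (ofAdd (1 : ZMod 3)) ≠ (1 : Multiplicative (ZMod 3)) := by decide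
  have h2 : (ofAdd (2 : ZMod 3)) ≠ (1 : Multiplicative (ZMod 3)) := by decide
  refine ⟨⟨(of_ne_one _ h1).symm, i, 1, (one_mul _).symm⟩,
      ⟨?_, i, 1, ?_⟩, ⟨(of_ne_one _ h2).symm, i, 2, (one_mul _).symm⟩⟩
  · intro h
    exact (by decide : (ofAdd (1 : ZMod 3)) ≠ ofAdd (2 : ZMod 3)) (of_injective i h)
  · rw [← map_mul]
    exact congrArg _ (by decide : (ofAdd (2:ZMod 3) : Multiplicative (ZMod 3)) = ofAdd 1 * ofAdd 1)

def altW : (n : ℕ) → (i j : ι) → i ≠ j →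
    {w : Word (MM ι) // w.toList.length = n ∧ Word.fstIdx w ≠ some j ∧
      (Word.fstIdx w = none ∨ Word.fstIdx w = some i)}
  | 0, _, j, _ => ⟨Word.empty, rfl, by simp [Word.fstIdx], Or.inl (by simp [Word.fstIdx])⟩
  | n+1, i, j, h =>
      let t := altW n j i h.symm
      have hone : (ofAdd (1 : ZMod 3) : Multiplicative (ZMod 3)) ≠ 1 := by decide
      ⟨Word.cons (M := MM ι) (i := i) (ofAdd 1) t.1 t.2.2.1 hone,
        by simp [Word.cons_toList, t.2.1], by simpa using h, Or.inr (by simp)⟩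

lemma not_colorable (i : ι) : ¬ (treeOfCliques ι 3).Colorable 2 := by
  rintro ⟨C⟩
  obtain ⟨hab, hbc, hac⟩ := triangle (ι := ι) i
  have := C.valid hab
  have := C.valid hbc
  have := C.valid hac
  revert this
  generalize C 1 = x at *
  generalize C (of (M := MM ι) (i := i) (ofAdd 1)) = y at *
  generalize C (of (M := MM ι) (i := i) (ofAdd 2)) = z at *
  revert x y z
  decide

lemma all_dists (n : ℕ) {i j : ι} (hij : i ≠ j) :
    ∃ u v : WW ι, (treeOfCliques ι 3).dist u v = n := by
  refine ⟨1, E.symm (altW n i j hij).1, ?_⟩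
  rw [TreeGamma2.dist_one, E.apply_symm_apply]
  exact (altW n i j hij).2.1

end TreeGamma3

namespace TreeGamma5
open Monoid.CoprodI Multiplicative List TreeGamma TreeGamma2 TreeGamma3

universe u
variable {ι : Type u} [DecidableEq ι]

noncomputable def sphereEquiv (v : WW ι) (n : ℕ) :
    {w : WW ι // (treeOfCliques ι 3).dist v w = n} ≃
      {ω : Word (MM ι) // ω.toList.length = n} :=
  Equiv.subtypeEquiv ((Equiv.mulLeft v⁻¹).trans E) (by
    intro w
    rw [dist_eq]
    rfl)

lemma card_words_le [Infinite ι] (n : ℕ) :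
    Cardinal.mk {ω : Word (MM ι) // ω.toList.length = n} ≤ Cardinal.mk ι := by
  haveI : Infinite (Σ _ : ι, Multiplicative (ZMod 3)) :=
    Infinite.of_injective (fun i => ⟨i, 1⟩) (fun a b h => congrArg Sigma.fst h)
  have h1 : Cardinal.mk {ω : Word (MM ι) // ω.toList.length = n} ≤
      Cardinal.mk (List (Σ _ : ι, Multiplicative (ZMod 3))) :=
    Cardinal.mk_le_of_injective (f := fun ω => ω.1.toList)
      (fun a b h => Subtype.ext (Word.ext h))
  have h2 : Cardinal.mk (List (Σ _ : ι, Multiplicative (ZMod 3))) =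
      Cardinal.mk (Σ _ : ι, Multiplicative (ZMod 3)) := Cardinal.mk_list_eq_mk _
  have h3 : Cardinal.mk (Σ _ : ι, Multiplicative (ZMod 3)) =
      Cardinal.mk (ι × Multiplicative (ZMod 3)) :=
    Cardinal.mk_congr (Equiv.sigmaEquivProd _ _)
  have h4 : Cardinal.mk (ι × Multiplicative (ZMod 3)) =
      Cardinal.mk ι * 3 := by
    rw [Cardinal.mk_prod]
    have hX : Cardinal.mk (Multiplicative (ZMod 3)) = 3 := by
      rw [Cardinal.mk_fintype]
      norm_num [ZMod.card]
    rw [hX, Cardinal.lift_id', Cardinal.lift_ofNat]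
  have h5 : Cardinal.mk ι * 3 = Cardinal.mk ι :=
    Cardinal.mul_eq_left (Cardinal.aleph0_le_mk ι)
      (le_trans ((by exact_mod_cast Cardinal.nat_lt_aleph0 3 : (3:Cardinal) < Cardinal.aleph0)).le
        (Cardinal.aleph0_le_mk ι)) (by norm_num)
  rw [h2, h3, h4, h5] at h1
  exact h1

lemma card_words_ge [Infinite ι] {n : ℕ} (hn : 1 ≤ n) :
    Cardinal.mk ι ≤ Cardinal.mk {ω : Word (MM ι) // ω.toList.length = n} := by
  obtain ⟨i₀, i₁, hne⟩ := exists_pair_ne ι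
  have hone : (ofAdd (1 : ZMod 3) : Multiplicative (ZMod 3)) ≠ 1 := by decide
  set w₀ := altW (n-1) i₀ i₁ hne with hw₀
  set w₁ := altW (n-1) i₁ i₀ hne.symm with hw₁
  have hlen : ∀ (j : ι) (w : Word (MM ι)) (hf : w.fstIdx ≠ some j)
      (hl : w.toList.length = n - 1),
      (Word.cons (M := MM ι) (i := j) (ofAdd 1) w hf hone).toList.length = n := by
    intro j w hf hl
    rw [Word.cons_toList]
    simp only [List.length_cons, hl]
    omega
  have hW : ∀ j : ι, ∃ ω : Word (MM ι), ω.toList.length = n ∧ ω.fstIdx = some j := by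
    intro j
    by_cases h : j = i₀
    · refine ⟨Word.cons (M := MM ι) (i := j) (ofAdd 1) w₁.1
        (by rw [h]; exact w₁.2.2.1) hone, hlen _ _ _ w₁.2.1, ?_⟩
      simp [Word.fstIdx, Word.cons_toList]
    · refine ⟨Word.cons (M := MM ι) (i := j) (ofAdd 1) w₀.1
        (by rcases w₀.2.2.2 with h' | h' <;> rw [h'] <;> simp [Ne.symm h]) hone,
        hlen _ _ _ w₀.2.1, ?_⟩
      simp [Word.fstIdx, Word.cons_toList]
  refine Cardinal.mk_le_of_injective
    (f := fun j : ι => (⟨(hW j).choose, (hW j).choose_spec.1⟩ :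
      {ω : Word (MM ι) // ω.toList.length = n})) ?_
  intro a b hab
  have ha := (hW a).choose_spec.2
  rw [show (hW a).choose = (hW b).choose from congrArg Subtype.val hab,
    (hW b).choose_spec.2] at ha
  exact (Option.some_injective _ ha).symm

lemma card_sphere [Infinite ι] (v : WW ι) {n : ℕ} (hn : 1 ≤ n) :
    Cardinal.mk {w : WW ι // (treeOfCliques ι 3).dist v w = n} = Cardinal.mk ι := by
  rw [Cardinal.mk_congr (sphereEquiv v n)]
  exact le_antisymm (card_words_le n) (card_words_ge hn)

end TreeGamma5

namespace TreeGamma6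
open Monoid.CoprodI Multiplicative List TreeGamma TreeGamma2

variable {ι : Type*} [DecidableEq ι]

abbrev LL (ι : Type*) := (Σ _ : ι, Multiplicative (ZMod 3))

lemma LLext {a b : ι} {x y : Multiplicative (ZMod 3)} (h1 : a = b) (h2 : x = y) :
    (⟨a, x⟩ : LL ι) = ⟨b, y⟩ := by subst h1; rw [h2]

structure LB (ι : Type*) where
  σ : ι ≃ ι
  c : ι → (ZMod 3)ˣ

def LB.act (β : LB ι) (l : LL ι) : LL ι :=
  ⟨β.σ l.1, ofAdd ((β.c l.1 : ZMod 3) * toAdd l.2)⟩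

def LB.inv (β : LB ι) : LB ι :=
  ⟨β.σ.symm, fun j => (β.c (β.σ.symm j))⁻¹⟩

lemma LB.act_fst (β : LB ι) (l : LL ι) : (β.act l).1 = β.σ l.1 := rfl

lemma ofAdd_toAdd' (x : Multiplicative (ZMod 3)) : ofAdd (toAdd x) = x := rfl

lemma toAdd_ne {x : Multiplicative (ZMod 3)} (h : x ≠ 1) : toAdd x ≠ 0 :=
  fun hc => h (by rw [← ofAdd_toAdd' x, hc]; rfl)

lemma LB.inv_act (β : LB ι) (l : LL ι) : β.inv.act (β.act l) = l := by
  obtain ⟨i, x⟩ := l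
  refine LLext (Equiv.symm_apply_apply _ _) ?_
  show ofAdd ((β.inv.c (β.σ i) : ZMod 3) * toAdd (ofAdd ((β.c i : ZMod 3) * toAdd x))) = x
  rw [toAdd_ofAdd]
  show ofAdd (((β.c (β.σ.symm (β.σ i)))⁻¹ : (ZMod 3)ˣ) * ((β.c i : ZMod 3) * toAdd x)) = x
  rw [Equiv.symm_apply_apply, Units.inv_mul_cancel_left, ofAdd_toAdd]

lemma LB.act_inv (β : LB ι) (l : LL ι) : β.act (β.inv.act l) = l := by
  obtain ⟨i, x⟩ := l
  refine LLext (Equiv.apply_symm_apply _ _) ?_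
  show ofAdd ((β.c (β.σ.symm i) : ZMod 3) * toAdd (ofAdd ((β.inv.c i : ZMod 3) * toAdd x))) = x
  rw [toAdd_ofAdd]
  show ofAdd ((β.c (β.σ.symm i) : ZMod 3) * (((β.c (β.σ.symm i))⁻¹ : (ZMod 3)ˣ) * toAdd x)) = x
  rw [Units.mul_inv_cancel_left, ofAdd_toAdd]

lemma LB.act_injective (β : LB ι) : Function.Injective β.act := by
  intro a b h
  rw [← β.inv_act a, ← β.inv_act b, h]

lemma LB.inv_inv (β : LB ι) : β.inv.inv = β := by
  obtain ⟨σ, c⟩ := β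
  show LB.mk _ _ = LB.mk _ _
  rw [LB.mk.injEq]
  refine ⟨Equiv.symm_symm σ, ?_⟩
  funext j
  show ((c (σ.symm (σ.symm.symm j)))⁻¹)⁻¹ = c j
  rw [_root_.inv_inv, Equiv.symm_symm, Equiv.symm_apply_apply]

lemma LB.act_snd_ne (β : LB ι) {l : LL ι} (h : l.2 ≠ 1) : (β.act l).2 ≠ 1 := by
  simp only [LB.act]
  intro hc
  apply toAdd_ne h
  have h2 : (β.c l.1 : ZMod 3) * toAdd l.2 = 0 := by
    have := congrArg toAdd hc
    rwa [toAdd_ofAdd] at this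
  rwa [Units.mul_right_eq_zero] at h2

def divUnit (y x : ZMod 3) : (ZMod 3)ˣ := if y = x then 1 else -1

lemma divUnit_mul : ∀ x y : ZMod 3, x ≠ 0 → y ≠ 0 → (divUnit y x : ZMod 3) * x = y := by decide

lemma divUnit_inv : ∀ x y : ZMod 3, (divUnit y x)⁻¹ = divUnit x y := by decide

def mkNext (i i' : ι) (op : Option (LL ι × LL ι)) : LB ι :=
  match op with
  | none => ⟨Equiv.swap i i', fun _ => 1⟩
  | some (a, b) =>
      if a.1 = i ∨ b.1 = i' ∨ a.2 = 1 ∨ b.2 = 1 then ⟨Equiv.swap i i', fun _ => 1⟩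
      else ⟨(Equiv.swap i i').trans (Equiv.swap (Equiv.swap i i' a.1) b.1),
            fun j => if j = a.1 then divUnit (toAdd b.2) (toAdd a.2) else 1⟩

lemma swap_conj (e : ι ≃ ι) (a b x : ι) :
    e (Equiv.swap a b x) = Equiv.swap (e a) (e b) (e x) := by
  by_cases hxa : x = a
  · subst hxa; rw [Equiv.swap_apply_left, Equiv.swap_apply_left]
  · by_cases hxb : x = b
    · subst hxb; rw [Equiv.swap_apply_right, Equiv.swap_apply_right]
    · rw [Equiv.swap_apply_of_ne_of_ne hxa hxb,
        Equiv.swap_apply_of_ne_of_ne (e.injective.ne hxa) (e.injective.ne hxb)]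

lemma mkNext_σ_anchor (i i' : ι) (op : Option (LL ι × LL ι)) :
    (mkNext i i' op).σ i = i' := by
  match op with
  | none => exact Equiv.swap_apply_left i i'
  | some (a, b) =>
      simp only [mkNext]
      split_ifs with h
      · exact Equiv.swap_apply_left i i'
      · push_neg at h
        simp only [Equiv.trans_apply, Equiv.swap_apply_left]
        refine Equiv.swap_apply_of_ne_of_ne ?_ (Ne.symm h.2.1)
        intro hc
        exact h.1 ((Equiv.swap i i').injective (hc ▸ Equiv.swap_apply_left i i')).symm

lemma mkNext_act {i i' : ι} {a b : LL ι} (h1 : a.1 ≠ i) (h2 : b.1 ≠ i')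
    (h3 : a.2 ≠ 1) (h4 : b.2 ≠ 1) :
    (mkNext i i' (some (a, b))).act a = b := by
  have hC : ¬(a.1 = i ∨ b.1 = i' ∨ a.2 = 1 ∨ b.2 = 1) := by tauto
  have hfst : (mkNext i i' (some (a, b))).σ a.1 = b.1 := by
    simp only [mkNext, if_neg hC, Equiv.trans_apply, Equiv.swap_apply_left]
  have hsnd : ofAdd (((mkNext i i' (some (a, b))).c a.1 : ZMod 3) * toAdd a.2) = b.2 := by
    simp only [mkNext, if_neg hC, if_pos rfl, eq_self_iff_true, if_true]
    rw [divUnit_mul (toAdd a.2) (toAdd b.2) (toAdd_ne h3) (toAdd_ne h4), ofAdd_toAdd]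
  show (⟨(mkNext i i' (some (a, b))).σ a.1,
    ofAdd (((mkNext i i' (some (a, b))).c a.1 : ZMod 3) * toAdd a.2)⟩ : LL ι) = b
  obtain ⟨j, y⟩ := b
  exact LLext hfst hsnd

lemma mkNext_inv (i i' : ι) (op : Option (LL ι × LL ι)) :
    (mkNext i i' op).inv = mkNext i' i (op.map Prod.swap) := by
  match op with
  | none =>
      simp only [mkNext, LB.inv, Option.map_none, Equiv.symm_swap, Equiv.swap_comm, inv_one]
  | some (a, b) =>
      simp only [Option.map_some, Prod.swap]
      by_cases hC : a.1 = i ∨ b.1 = i' ∨ a.2 = 1 ∨ b.2 = 1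
      · have hC' : b.1 = i' ∨ a.1 = i ∨ b.2 = 1 ∨ a.2 = 1 := by tauto
        simp only [mkNext, if_pos hC, if_pos hC', LB.inv, Equiv.symm_swap,
          Equiv.swap_comm, inv_one]
      · have hC' : ¬(b.1 = i' ∨ a.1 = i ∨ b.2 = 1 ∨ a.2 = 1) := by tauto
        simp only [mkNext, if_neg hC, if_neg hC', LB.inv]
        have hσa : ((Equiv.swap i i').trans (Equiv.swap (Equiv.swap i i' a.1) b.1)) a.1
            = b.1 := by
          simp only [Equiv.trans_apply, Equiv.swap_apply_left]
        have hsymm : ((Equiv.swap i i').trans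
            (Equiv.swap (Equiv.swap i i' a.1) b.1)).symm b.1 = a.1 := by
          rw [Equiv.symm_apply_eq]
          exact hσa.symm
        congr 1
        · ext x
          simp only [Equiv.symm_trans_apply, Equiv.symm_swap, Equiv.trans_apply]
          rw [swap_conj (Equiv.swap i i') ((Equiv.swap i i') a.1) b.1 x,
            Equiv.swap_apply_self, Equiv.swap_comm i' i,
            Equiv.swap_comm a.1 ((Equiv.swap i i') b.1)]
        · funext j
          by_cases hj : j = b.1
          · subst hj
            rw [hsymm, if_pos rfl, if_pos rfl, divUnit_inv]
          · have hne : ((Equiv.swap i i').trans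
                (Equiv.swap (Equiv.swap i i' a.1) b.1)).symm j ≠ a.1 := by
              intro hc
              apply hj
              have h' := congrArg (((Equiv.swap i i').trans
                (Equiv.swap (Equiv.swap i i' a.1) b.1)) : ι → ι) hc
              rw [Equiv.apply_symm_apply] at h'
              rw [h', hσa]
            rw [if_neg hne, if_neg hj, inv_one]

end TreeGamma6

namespace TreeGamma7
open Monoid.CoprodI Multiplicative List TreeGamma TreeGamma2 TreeGamma6

variable {ι : Type*} [DecidableEq ι]

def headPair : List (LL ι) → List (LL ι) → Option (LL ι × LL ι)
  | a :: _, b :: _ => some (a, b)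
  | _, _ => none

lemma headPair_swap {p q : List (LL ι)} (h : p.length = q.length) :
    headPair q p = (headPair p q).map Prod.swap := by
  match p, q with
  | [], [] => rfl
  | a :: p', b :: q' => rfl
  | [], b :: q' => simp at h
  | a :: p', [] => simp at h

def nextState (l : LL ι) (β : LB ι) :
    List (LL ι) → List (LL ι) → LB ι × List (LL ι) × List (LL ι)
  | a :: p', b :: q' =>
      if l = a then (mkNext l.1 (β.act l).1 (headPair p' q'), p', q')
      else (mkNext l.1 (β.act l).1 none, [], [])
  | _, _ => (mkNext l.1 (β.act l).1 none, [], [])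

lemma nextState_σ_anchor (l : LL ι) (β : LB ι) (p q : List (LL ι)) :
    (nextState l β p q).1.σ l.1 = (β.act l).1 := by
  match p, q with
  | [], [] => exact mkNext_σ_anchor _ _ _
  | [], _ :: _ => exact mkNext_σ_anchor _ _ _
  | _ :: _, [] => exact mkNext_σ_anchor _ _ _
  | a :: p', b :: q' =>
      simp only [nextState]
      split_ifs <;> exact mkNext_σ_anchor _ _ _

def Fmap : List (LL ι) → LB ι → List (LL ι) → List (LL ι) → List (LL ι)
  | [], _, _, _ => []
  | l :: x, β, p, q =>
      β.act l :: Fmap x (nextState l β p q).1 (nextState l β p q).2.1 (nextState l β p q).2.2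

def stateAfter : List (LL ι) → LB ι → List (LL ι) → List (LL ι) →
    LB ι × List (LL ι) × List (LL ι)
  | [], β, p, q => (β, p, q)
  | l :: x, β, p, q =>
      stateAfter x (nextState l β p q).1 (nextState l β p q).2.1 (nextState l β p q).2.2

lemma Fmap_append (x y : List (LL ι)) : ∀ (β : LB ι) (p q : List (LL ι)),
    Fmap (x ++ y) β p q = Fmap x β p q ++
      Fmap y (stateAfter x β p q).1 (stateAfter x β p q).2.1 (stateAfter x β p q).2.2 := by
  induction x with
  | nil => intro β p q; rfl
  | cons l x ih =>
      intro β p q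
      simp only [List.cons_append, List.append_eq, Fmap, stateAfter, ih]

lemma Fmap_length (x : List (LL ι)) : ∀ (β : LB ι) (p q : List (LL ι)),
    (Fmap x β p q).length = x.length := by
  induction x with
  | nil => intro β p q; rfl
  | cons l x ih => intro β p q; simp only [Fmap, List.length_cons, ih]

lemma Fmap_ne_one (x : List (LL ι)) : ∀ (β : LB ι) (p q : List (LL ι)),
    (∀ l ∈ x, l.2 ≠ 1) → ∀ l' ∈ Fmap x β p q, l'.2 ≠ 1 := by
  induction x with
  | nil => intro β p q _ l' h'; simp [Fmap] at h'
  | cons l x ih =>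
      intro β p q hx l' h'
      rcases List.mem_cons.mp h' with rfl | h'
      · exact LB.act_snd_ne β (hx l (List.mem_cons_self))
      · exact ih _ _ _ (fun m hm => hx m (List.mem_cons_of_mem _ hm)) l' h'

lemma Fmap_chain (x : List (LL ι)) : ∀ (β : LB ι) (p q : List (LL ι)),
    x.Chain' (fun l l' => l.1 ≠ l'.1) →
    (Fmap x β p q).Chain' (fun l l' => l.1 ≠ l'.1) := by
  induction x with
  | nil => intro β p q _; exact List.isChain_nil
  | cons l x ih =>
      intro β p q hx
      unfold List.Chain' at hx
      rw [List.isChain_cons] at hx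
      show List.Chain' _ (β.act l :: Fmap x _ _ _)
      unfold List.Chain'
      rw [List.isChain_cons]
      refine ⟨?_, ih _ _ _ hx.2⟩
      intro y hy
      match x, hy with
      | m :: x', hy =>
          have hy' : y = (nextState l β p q).1.act m := by
            simp only [Fmap, List.head?_cons, Option.mem_def, Option.some.injEq] at hy
            exact hy.symm
          have hm : m.1 ≠ l.1 := Ne.symm (hx.1 m (by simp))
          rw [hy']
          intro hc
          rw [← nextState_σ_anchor l β p q, LB.act_fst] at hc
          exact hm (((nextState l β p q).1.σ.injective hc).symm)

def PathOK (p : List (LL ι)) : Prop :=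
  p.Chain' (fun l l' => l.1 ≠ l'.1) ∧ ∀ l ∈ p, l.2 ≠ 1

lemma PathOK_nil : PathOK ([] : List (LL ι)) := ⟨List.isChain_nil, by simp⟩

lemma PathOK_tail {a : LL ι} {p : List (LL ι)} (h : PathOK (a :: p)) : PathOK p :=
  ⟨h.1.tail, fun l hl => h.2 l (List.mem_cons_of_mem _ hl)⟩

def Aligned (β : LB ι) (p q : List (LL ι)) : Prop :=
  ∀ a b (p' q' : List (LL ι)), p = a :: p' → q = b :: q' → β.act a = b

lemma aligned_next {β : LB ι} {a b : LL ι} {p' q' : List (LL ι)}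
    (hp : PathOK (a :: p')) (hq : PathOK (b :: q')) (hab : β.act a = b) :
    Aligned (mkNext a.1 b.1 (headPair p' q')) p' q' := by
  rintro a' b' p'' q'' rfl rfl
  have := mkNext_act (i := a.1) (i' := b.1) (a := a') (b := b')
    (Ne.symm (List.isChain_cons_cons.mp hp.1).1)
    (Ne.symm (List.isChain_cons_cons.mp hq.1).1)
    (hp.2 a' (by simp)) (hq.2 b' (by simp))
  simpa [headPair] using this

lemma Fmap_path (p : List (LL ι)) : ∀ (q : List (LL ι)) (β : LB ι),
    p.length = q.length → PathOK p → PathOK q → Aligned β p q →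
    Fmap p β p q = q := by
  induction p with
  | nil =>
      intro q β hlen _ _ _
      have hq0 : q = [] := List.length_eq_zero_iff.mp (by simpa using hlen.symm)
      subst hq0; rfl
  | cons a p' ih =>
      intro q β hlen hp hq hal
      match q, hlen with
      | b :: q', hlen =>
          have hab : β.act a = b := hal a b p' q' rfl rfl
          show β.act a :: Fmap p' _ _ _ = b :: q'
          have hns : nextState a β (a :: p') (b :: q') =
              (mkNext a.1 (β.act a).1 (headPair p' q'), p', q') := by
            simp only [nextState, if_pos rfl, eq_self_iff_true, if_true]
          rw [hns]
          simp only []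
          rw [hab]
          congr 1
          refine ih q' _ (by simpa using hlen) (PathOK_tail hp) (PathOK_tail hq) ?_
          exact aligned_next hp hq hab

lemma Fmap_inv (x : List (LL ι)) : ∀ (β : LB ι) (p q : List (LL ι)),
    p.length = q.length → PathOK p → PathOK q → Aligned β p q →
    Fmap (Fmap x β p q) β.inv q p = x := by
  induction x with
  | nil => intro β p q _ _ _ _; rfl
  | cons l x ih =>
      intro β p q hlen hp hq hal
      show Fmap (β.act l :: Fmap x _ _ _) β.inv q p = l :: x
      show β.inv.act (β.act l) ::
        Fmap (Fmap x (nextState l β p q).1 (nextState l β p q).2.1 (nextState l β p q).2.2)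
          (nextState (β.act l) β.inv q p).1 (nextState (β.act l) β.inv q p).2.1
          (nextState (β.act l) β.inv q p).2.2 = l :: x
      rw [LB.inv_act]
      congr 1
      match p, q, hlen with
      | [], [], _ =>
          have h1 : nextState l β ([] : List (LL ι)) [] =
            (mkNext l.1 (β.act l).1 none, [], []) := rfl
          have h2 : nextState (β.act l) β.inv ([] : List (LL ι)) [] =
            (mkNext (β.act l).1 (β.inv.act (β.act l)).1 none, [], []) := rfl
          rw [h1, h2]
          simp only [LB.inv_act]
          rw [show mkNext (β.act l).1 l.1 none =
            (mkNext l.1 (β.act l).1 none).inv by rw [mkNext_inv]; rfl]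
          exact ih _ _ _ rfl PathOK_nil PathOK_nil (by rintro a b p' q' ⟨⟩)
      | a :: p', b :: q', hlen =>
          have hab : β.act a = b := hal a b p' q' rfl rfl
          by_cases hla : l = a
          · subst hla
            have h1 : nextState l β (l :: p') (b :: q') =
                (mkNext l.1 (β.act l).1 (headPair p' q'), p', q') := by
              simp only [nextState, if_pos rfl, eq_self_iff_true, if_true]
            have h2 : nextState (β.act l) β.inv (b :: q') (l :: p') =
                (mkNext b.1 (β.inv.act b).1 (headPair q' p'), q', p') := by
              simp only [nextState, hab, if_pos rfl, eq_self_iff_true, if_true]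
            rw [h1, h2]
            simp only []
            have hb2 : β.inv.act b = l := by rw [← hab, LB.inv_act]
            rw [hb2, hab]
            have hlen' : p'.length = q'.length := by simpa using hlen
            rw [show mkNext b.1 l.1 (headPair q' p') =
              (mkNext l.1 b.1 (headPair p' q')).inv by
                rw [mkNext_inv, headPair_swap hlen']]
            refine ih _ _ _ hlen' (PathOK_tail hp) (PathOK_tail hq) ?_
            exact aligned_next hp hq hab
          · have hlb : β.act l ≠ b := fun hc => hla (β.act_injective (by rw [hc, hab]))
            have h1 : nextState l β (a :: p') (b :: q') =
                (mkNext l.1 (β.act l).1 none, [], []) := by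
              simp only [nextState, if_neg hla]
            have h2 : nextState (β.act l) β.inv (b :: q') (a :: p') =
                (mkNext (β.act l).1 (β.inv.act (β.act l)).1 none, [], []) := by
              simp only [nextState, if_neg hlb]
            rw [h1, h2]
            simp only [LB.inv_act]
            rw [show mkNext (β.act l).1 l.1 none =
              (mkNext l.1 (β.act l).1 none).inv by rw [mkNext_inv]; rfl]
            exact ih _ _ _ rfl PathOK_nil PathOK_nil (by rintro a' b' p'' q'' ⟨⟩)

end TreeGamma7


namespace TreeGamma8
open Monoid.CoprodI Multiplicative List TreeGamma TreeGamma2 TreeGamma6 TreeGamma7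

variable {ι : Type*} [DecidableEq ι]

def pOf (u : Word (MM ι)) : List (LL ι) := u.toList.reverse

lemma pathOK_pOf (u : Word (MM ι)) : PathOK (pOf u) := by
  constructor
  · unfold List.Chain'
    rw [pOf, List.isChain_reverse]
    exact u.chain_ne.imp (fun {a b} h => Ne.symm h)
  · intro l hl
    exact u.ne_one l (List.mem_reverse.mp hl)

lemma pOf_length {u v : Word (MM ι)} (h : u.toList.length = v.toList.length) :
    (pOf u).length = (pOf v).length := by simp [pOf, h]

def startLB (p q : List (LL ι)) : LB ι :=
  match headPair p q with
  | some (a, b) => ⟨Equiv.swap a.1 b.1,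
      fun j => if j = a.1 then divUnit (toAdd b.2) (toAdd a.2) else 1⟩
  | none => ⟨Equiv.refl ι, fun _ => 1⟩

lemma startLB_inv (p q : List (LL ι)) (hlen : p.length = q.length) :
    (startLB p q).inv = startLB q p := by
  match p, q, hlen with
  | [], [], _ =>
      show LB.mk _ _ = LB.mk _ _
      rw [LB.mk.injEq]
      exact ⟨by ext x; rfl, by funext j; exact inv_one⟩
  | a :: p', b :: q', _ =>
      show LB.mk _ _ = LB.mk _ _
      rw [LB.mk.injEq]
      constructor
      · show (Equiv.swap a.1 b.1).symm = Equiv.swap b.1 a.1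
        rw [Equiv.symm_swap, Equiv.swap_comm]
      · funext j
        show (if (Equiv.swap a.1 b.1).symm j = a.1 then
            divUnit (toAdd b.2) (toAdd a.2) else 1)⁻¹ =
          if j = b.1 then divUnit (toAdd a.2) (toAdd b.2) else 1
        rw [Equiv.symm_swap]
        by_cases hj : j = b.1
        · subst hj
          rw [if_pos (Equiv.swap_apply_right a.1 b.1), if_pos rfl, divUnit_inv]
        · have hne : Equiv.swap a.1 b.1 j ≠ a.1 := by
            intro hc
            exact hj ((Equiv.swap a.1 b.1).injective
              (hc.trans (Equiv.swap_apply_right a.1 b.1).symm))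
          rw [if_neg hne, if_neg hj, inv_one]

lemma startLB_aligned (p q : List (LL ι)) (hp : PathOK p) (hq : PathOK q) :
    Aligned (startLB p q) p q := by
  rintro a b p' q' rfl rfl
  have ha : a.2 ≠ 1 := hp.2 a (by simp)
  have hb : b.2 ≠ 1 := hq.2 b (by simp)
  have hfst : (startLB (a :: p') (b :: q')).σ a.1 = b.1 := by
    show Equiv.swap a.1 b.1 a.1 = b.1
    exact Equiv.swap_apply_left _ _
  have hsnd : ofAdd (((startLB (a :: p') (b :: q')).c a.1 : ZMod 3) * toAdd a.2) = b.2 := by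
    have hc : (startLB (a :: p') (b :: q')).c a.1 = divUnit (toAdd b.2) (toAdd a.2) := by
      show (if a.1 = a.1 then divUnit (toAdd b.2) (toAdd a.2) else 1) = _
      rw [if_pos rfl]
    rw [hc, divUnit_mul (toAdd a.2) (toAdd b.2) (toAdd_ne ha) (toAdd_ne hb), ofAdd_toAdd]
  show (⟨(startLB (a :: p') (b :: q')).σ a.1,
    ofAdd (((startLB (a :: p') (b :: q')).c a.1 : ZMod 3) * toAdd a.2)⟩ : LL ι) = b
  obtain ⟨j, y⟩ := b
  exact LLext hfst hsnd

def wordAutoFun (β : LB ι) (p q : List (LL ι)) (w : Word (MM ι)) : Word (MM ι) where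
  toList := (Fmap w.toList.reverse β p q).reverse
  ne_one := fun l hl => Fmap_ne_one _ β p q
    (fun m hm => w.ne_one m (List.mem_reverse.mp hm)) l (List.mem_reverse.mp hl)
  chain_ne := by
    rw [List.isChain_reverse]
    refine (Fmap_chain _ β p q ?_).imp (fun {a b} h => Ne.symm h)
    unfold List.Chain'
    rw [List.isChain_reverse]
    exact w.chain_ne.imp (fun {a b} h => Ne.symm h)

lemma wordAutoFun_toList (β : LB ι) (p q : List (LL ι)) (w : Word (MM ι)) :
    (wordAutoFun β p q w).toList = (Fmap w.toList.reverse β p q).reverse := rfl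

lemma wordAutoFun_inv {β : LB ι} {p q : List (LL ι)} (hlen : p.length = q.length)
    (hp : PathOK p) (hq : PathOK q) (hal : Aligned β p q) (w : Word (MM ι)) :
    wordAutoFun β.inv q p (wordAutoFun β p q w) = w := by
  apply Word.ext
  rw [wordAutoFun_toList, wordAutoFun_toList, List.reverse_reverse,
    Fmap_inv _ β p q hlen hp hq hal, List.reverse_reverse]

def wordAuto (u v : Word (MM ι)) (hlen : u.toList.length = v.toList.length) :
    Word (MM ι) ≃ Word (MM ι) where
  toFun := wordAutoFun (startLB (pOf u) (pOf v)) (pOf u) (pOf v)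
  invFun := wordAutoFun (startLB (pOf v) (pOf u)) (pOf v) (pOf u)
  left_inv := by
    intro w
    rw [show startLB (pOf v) (pOf u) = (startLB (pOf u) (pOf v)).inv from
      (startLB_inv _ _ (pOf_length hlen)).symm]
    exact wordAutoFun_inv (pOf_length hlen) (pathOK_pOf u) (pathOK_pOf v)
      (startLB_aligned _ _ (pathOK_pOf u) (pathOK_pOf v)) w
  right_inv := by
    intro w
    rw [show startLB (pOf u) (pOf v) = (startLB (pOf v) (pOf u)).inv from
      (startLB_inv _ _ (pOf_length hlen).symm).symm]
    exact wordAutoFun_inv (pOf_length hlen).symm (pathOK_pOf v) (pathOK_pOf u)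
      (startLB_aligned _ _ (pathOK_pOf v) (pathOK_pOf u)) w

lemma wordAuto_empty (u v : Word (MM ι)) (hlen : u.toList.length = v.toList.length) :
    wordAuto u v hlen Word.empty = Word.empty := by
  apply Word.ext
  rfl

lemma wordAuto_apply (u v : Word (MM ι)) (hlen : u.toList.length = v.toList.length) :
    wordAuto u v hlen u = v := by
  apply Word.ext
  show (Fmap u.toList.reverse (startLB (pOf u) (pOf v)) (pOf u) (pOf v)).reverse = v.toList
  have h0 : u.toList.reverse = pOf u := rfl
  rw [h0, Fmap_path (pOf u) (pOf v) _ (pOf_length hlen) (pathOK_pOf u) (pathOK_pOf v)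
    (startLB_aligned _ _ (pathOK_pOf u) (pathOK_pOf v))]
  exact List.reverse_reverse _

lemma wordAutoFun_adjL (β : LB ι) (p q : List (LL ι)) {w w' : Word (MM ι)}
    (h : AdjL w w') : AdjL (wordAutoFun β p q w) (wordAutoFun β p q w') := by
  rcases h with ⟨l, hl⟩ | ⟨l, hl⟩ | ⟨i, a, b, t, hab, h1, h2⟩
  · left
    refine ⟨(stateAfter w.toList.reverse β p q).1.act l, ?_⟩
    have hrev : w'.toList.reverse = w.toList.reverse ++ [l] := by rw [hl]; simp
    rw [wordAutoFun_toList, wordAutoFun_toList, hrev, Fmap_append]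
    simp [Fmap]
  · right; left
    refine ⟨(stateAfter w'.toList.reverse β p q).1.act l, ?_⟩
    have hrev : w.toList.reverse = w'.toList.reverse ++ [l] := by rw [hl]; simp
    rw [wordAutoFun_toList, wordAutoFun_toList, hrev, Fmap_append]
    simp [Fmap]
  · right; right
    set st := (stateAfter t.reverse β p q).1 with hst
    refine ⟨st.σ i, ofAdd ((st.c i : ZMod 3) * toAdd a), ofAdd ((st.c i : ZMod 3) * toAdd b),
      (Fmap t.reverse β p q).reverse, ?_, ?_, ?_⟩
    · intro hc
      apply hab
      have h3 := congrArg toAdd hc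
      rw [toAdd_ofAdd, toAdd_ofAdd, Units.mul_right_inj] at h3
      calc a = ofAdd (toAdd a) := rfl
      _ = ofAdd (toAdd b) := by rw [h3]
      _ = b := rfl
    · have hrev : w.toList.reverse = t.reverse ++ [(⟨i, a⟩ : LL ι)] := by rw [h1]; simp
      rw [wordAutoFun_toList, hrev, Fmap_append, ← hst]
      show (Fmap t.reverse β p q ++ [st.act ⟨i, a⟩]).reverse = _
      rw [List.reverse_append]
      rfl
    · have hrev : w'.toList.reverse = t.reverse ++ [(⟨i, b⟩ : LL ι)] := by rw [h2]; simp
      rw [wordAutoFun_toList, hrev, Fmap_append, ← hst]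
      show (Fmap t.reverse β p q ++ [st.act ⟨i, b⟩]).reverse = _
      rw [List.reverse_append]
      rfl

lemma wordAuto_adjL (u v : Word (MM ι)) (hlen : u.toList.length = v.toList.length)
    (w w' : Word (MM ι)) :
    AdjL w w' ↔ AdjL (wordAuto u v hlen w) (wordAuto u v hlen w') := by
  constructor
  · exact fun h => wordAutoFun_adjL _ _ _ h
  · intro h
    have h2 := wordAutoFun_adjL (startLB (pOf v) (pOf u)) (pOf v) (pOf u) h
    have hl := (wordAuto u v hlen).left_inv w
    have hl2 := (wordAuto u v hlen).left_inv w'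
    show AdjL w w'
    rw [← hl, ← hl2]
    exact h2

noncomputable def mkIso (F : Word (MM ι) ≃ Word (MM ι))
    (hF : ∀ w w', AdjL w w' ↔ AdjL (F w) (F w')) :
    (treeOfCliques ι 3) ≃g (treeOfCliques ι 3) where
  toEquiv := E.trans (F.trans E.symm)
  map_rel_iff' := by
    intro a b
    show (treeOfCliques ι 3).Adj (E.symm (F (E a))) (E.symm (F (E b))) ↔
      (treeOfCliques ι 3).Adj a b
    rw [adj_iff_adjL, adj_iff_adjL, E.apply_symm_apply, E.apply_symm_apply]
    exact (hF _ _).symm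

lemma mkIso_apply (F : Word (MM ι) ≃ Word (MM ι))
    (hF : ∀ w w', AdjL w w' ↔ AdjL (F w) (F w')) (u : WW ι) :
    mkIso F hF u = E.symm (F (E u)) := rfl

end TreeGamma8


namespace TreeGamma9
open Monoid.CoprodI Multiplicative TreeGamma TreeGamma2 TreeGamma3 TreeGamma5 TreeGamma6 TreeGamma7 TreeGamma8

lemma dt (ι : Type*) [DecidableEq ι] :
    ∀ a b c d : WW ι, (treeOfCliques ι 3).dist a b = (treeOfCliques ι 3).dist c d →
      ∃ φ : (treeOfCliques ι 3) ≃g (treeOfCliques ι 3), φ a = c ∧ φ b = d := by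
  intro a b c d h
  rw [dist_eq, dist_eq] at h
  refine ⟨((transIso a⁻¹).trans (mkIso (wordAuto (E (a⁻¹ * b)) (E (c⁻¹ * d)) h)
    (wordAuto_adjL _ _ h))).trans (transIso c), ?_, ?_⟩
  · rw [RelIso.trans_apply, RelIso.trans_apply, transIso_apply, mkIso_apply, transIso_apply,
      inv_mul_cancel, E_one, wordAuto_empty, ← E_one, Equiv.symm_apply_apply, mul_one]
  · rw [RelIso.trans_apply, RelIso.trans_apply, transIso_apply, mkIso_apply, transIso_apply,
      wordAuto_apply, Equiv.symm_apply_apply, mul_inv_cancel_left]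

end TreeGamma9


/-- The graph `Γ^κ` obtained by attaching `κ`-many triangles at every vertex (the `κ`-tree
of triangles, for `κ = |ι|` infinite) is distance-transitive, contains a triangle (hence is
not bipartite), has infinite diameter, and every distance sphere of positive radius has
cardinality `κ`. -/
theorem treeOfTriangles_properties (ι : Type*) [Infinite ι] :
    DistanceTransitive (treeOfCliques ι 3) ∧
    (∃ a b c, (treeOfCliques ι 3).Adj a b ∧ (treeOfCliques ι 3).Adj b c ∧
      (treeOfCliques ι 3).Adj a c) ∧
    ¬ (treeOfCliques ι 3).Colorable 2 ∧
    (∀ n : ℕ, ∃ u v, (treeOfCliques ι 3).dist u v = n) ∧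
    (∀ v, ∀ i : ℕ, 1 ≤ i →
      Cardinal.mk {w // (treeOfCliques ι 3).dist v w = i} = Cardinal.mk ι) := by
  letI : DecidableEq ι := Classical.decEq ι
  obtain ⟨i₀, i₁, hi⟩ := exists_pair_ne ι
  refine ⟨TreeGamma9.dt ι, ?_, ?_, ?_, ?_⟩
  · obtain ⟨h1, h2, h3⟩ := TreeGamma3.triangle (ι := ι) i₀
    exact ⟨1, _, _, h1, h2, h3⟩
  · exact TreeGamma3.not_colorable i₀
  · exact fun n => TreeGamma3.all_dists n hi
  · intro v i hi1
    exact TreeGamma5.card_sphere v hi1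
end
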